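/- Let l ∈ ℕ, p₁,…,p_l ∈ (0,1], y ∈ {0,1}^l, x ∈ 𝒳, and f* : {0,1}^l × 𝒳 → ℝ. Then the two forms of the propensity-scored multilabel loss coincide: Σ_{ℐ ⊆ {1,…,l}} f*(𝟙_ℐ, x) · (∏_{i ∈ ℐ} y_i/p_i) · ∏_{j ∉ ℐ} (1 − y_j/p_j) = (∏_{i ∈ I(y)} 1/p_i) · Σ_{𝒥 ⊆ I(y)} f*(𝟙_𝒥, x) · ∏_{j ∈ I(y) \ 𝒥} (p_j − 1), where both sums run over subsets of {1,…,l} and of I(y) respectively. -/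

import Mathlib

/-! A weight `∏_{i ∈ ℐ} yᵢ/pᵢ` vanishes as soon as `ℐ` contains a label with `yᵢ = 0`, so only
the subsets of the positive labels `S = I(y)` contribute. For `ℐ ⊆ S` the factors `1 - yⱼ/pⱼ`
with `j ∉ S` are `1`, and those with `j ∈ S \ ℐ` are `pⱼ⁻¹ (pⱼ - 1)`; collecting the `pᵢ⁻¹`
over `ℐ` and `S \ ℐ` gives `∏_{i ∈ S} pᵢ⁻¹`. -/

/-- The set of positive labels `I(y) = {i : yᵢ = 1}` of a label vector `y ∈ {0,1}^l`. -/
noncomputable def posSet {l : ℕ} (y : Fin l → ℝ) : Finset (Fin l) :=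
  Finset.univ.filter (fun i => y i = 1)

/-- The indicator vector `𝟙_𝒥 ∈ {0,1}^l` of a subset `𝒥 ⊆ {1,…,l}`. -/
def indVec {l : ℕ} (J : Finset (Fin l)) : Fin l → ℝ := fun i => if i ∈ J then 1 else 0

open Finset

lemma mem_posSet {l : ℕ} {y : Fin l → ℝ} {i : Fin l} : i ∈ posSet y ↔ y i = 1 := by
  simp [posSet]

section

variable {ι K : Type*} [Field K] {S I : Finset ι} {y p : ι → K}

lemma prod_div_eq_zero_of_not_subset (hS₀ : ∀ i ∉ S, y i = 0) (hI : ¬ I ⊆ S) :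
    ∏ i ∈ I, y i / p i = 0 := by
  obtain ⟨i, hiI, hiS⟩ := not_subset.mp hI
  exact prod_eq_zero hiI (by rw [hS₀ i hiS, zero_div])

variable [Fintype ι] [DecidableEq ι]

lemma prod_div_mul_prod_compl_one_sub_div (hS₁ : ∀ i ∈ S, y i = 1) (hS₀ : ∀ i ∉ S, y i = 0)
    (hp : ∀ i ∈ S, p i ≠ 0) (hI : I ⊆ S) :
    (∏ i ∈ I, y i / p i) * ∏ j ∈ univ \ I, (1 - y j / p j)
      = (∏ i ∈ S, (p i)⁻¹) * ∏ j ∈ S \ I, (p j - 1) := by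
  have h_on_I : ∏ i ∈ I, y i / p i = ∏ i ∈ I, (p i)⁻¹ :=
    prod_congr rfl fun i hi => by rw [hS₁ i (hI hi), one_div]
  have h_compl : ∏ j ∈ univ \ I, (1 - y j / p j) = ∏ j ∈ S \ I, (p j)⁻¹ * (p j - 1) := by
    rw [← prod_subset (sdiff_subset_sdiff S.subset_univ subset_rfl)]
    · refine prod_congr rfl fun j hj => ?_
      have hjS := (mem_sdiff.mp hj).1
      rw [hS₁ j hjS]
      field_simp [hp j hjS]
    · intro j hj hjSI
      have hjS : j ∉ S := fun hjS => hjSI (mem_sdiff.mpr ⟨hjS, (mem_sdiff.mp hj).2⟩)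
      rw [hS₀ j hjS, zero_div, sub_zero]
  rw [h_on_I, h_compl, prod_mul_distrib, ← mul_assoc, mul_comm (∏ i ∈ I, _), prod_sdiff hI]

end

/-- **Equivalence of the two forms of the propensity-scored multilabel loss.** For
`p i ∈ (0,1]`, `y ∈ {0,1}^l`, `x ∈ 𝒳` and any `f* : {0,1}^l × 𝒳 → ℝ`:
`Σ_{ℐ ⊆ [l]} f*(𝟙_ℐ, x) · (∏_{i ∈ ℐ} yᵢ/pᵢ) · ∏_{j ∉ ℐ} (1 − yⱼ/pⱼ)
  = (∏_{i ∈ I(y)} 1/pᵢ) · Σ_{𝒥 ⊆ I(y)} f*(𝟙_𝒥, x) · ∏_{j ∈ I(y) \ 𝒥} (pⱼ − 1)`. -/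
theorem ps_multilabel_two_forms
    {𝒳 : Type*} (l : ℕ) (p : Fin l → ℝ) (hp : ∀ i, p i ∈ Set.Ioc (0 : ℝ) 1)
    (y : Fin l → ℝ) (hy : ∀ i, y i = 0 ∨ y i = 1)
    (x : 𝒳) (fstar : (Fin l → ℝ) → 𝒳 → ℝ) :
    ∑ I ∈ (Finset.univ : Finset (Fin l)).powerset,
        fstar (indVec I) x * (∏ i ∈ I, y i / p i) * ∏ j ∈ Finset.univ \ I, (1 - y j / p j)
      = (∏ i ∈ posSet y, (p i)⁻¹) *
          ∑ J ∈ (posSet y).powerset,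
            fstar (indVec J) x * ∏ j ∈ posSet y \ J, (p j - 1) := by
  have hS₁ : ∀ i ∈ posSet y, y i = 1 := fun i => mem_posSet.mp
  have hS₀ : ∀ i ∉ posSet y, y i = 0 := fun i hi => (hy i).resolve_right (mt mem_posSet.mpr hi)
  have hp₀ : ∀ i ∈ posSet y, p i ≠ 0 := fun i _ => (hp i).1.ne'
  rw [← sum_subset (powerset_mono.mpr (subset_univ _)), mul_sum]
  · refine sum_congr rfl fun J hJ => ?_
    rw [mul_assoc, prod_div_mul_prod_compl_one_sub_div hS₁ hS₀ hp₀ (mem_powerset.mp hJ)]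
    ring
  · intro I _ hI
    rw [prod_div_eq_zero_of_not_subset hS₀ (mt mem_powerset.mpr hI), mul_zero, zero_mul]
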